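/- Let M be an m×m real matrix satisfying the conditions of the paper's Markov framework (upper triangular, diagonal entries in [0,1), rows except the last summing to 1, last row zero, and the column-independent ratio property), let A = I − M, let δ_j = −A(j−1,j)/(A(j−1,j−1)·A(j,j)), and let p be a probability distribution row vector on {0,…,m−1}. Then p·A^{-1}·A^{-1}·M·e_{m−1} = ∑_{i=0}^{m−2} p(i)·(1/A(i,i) + ∑_{j=i+1}^{m−2} δ_j), where e_{m−1} = (0,…,0,1)^T. -/

import Mathlib

/-- The value `δ_j = −A(j−1,j)/(A(j−1,j−1)·A(j,j))` where `A = I − M`. -/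
noncomputable def delta {m : ℕ} (M : Matrix (Fin m) (Fin m) ℝ) (j : Fin m) : ℝ :=
  -(1 - M) ⟨(j : ℕ) - 1, lt_of_le_of_lt (Nat.sub_le _ _) j.isLt⟩ j /
    ((1 - M) ⟨(j : ℕ) - 1, lt_of_le_of_lt (Nat.sub_le _ _) j.isLt⟩
        ⟨(j : ℕ) - 1, lt_of_le_of_lt (Nat.sub_le _ _) j.isLt⟩ *
      (1 - M) j j)

/-!
Write `A = 1 - M` and let `B` have `δ_j` strictly above the diagonal of column `j` and
`A(j,j)⁻¹` on it. The ratio condition makes the tail (columns `≥ j`) of each row `i < j` of `M`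
a multiple of the tail of row `j - 1`; since every row of `A` but the last sums to zero, the
entry `(A * B) i j` is then the same multiple of `(A * B) (j - 1) j`, which vanishes by the very
definition of `δ_j`. So `B = A⁻¹`. Row `m - 2` of `M` puts all its off-diagonal mass on column
`m - 1`, whence `δ_{m-1} = 1` and the last column of `B` is all ones. Finally
`B * B * M = B * B - B`, whose last column consists of the row sums of `B` minus one.
-/

namespace Baco

variable {m : ℕ} (M : Matrix (Fin m) (Fin m) ℝ)

noncomputable def invOneSub : Matrix (Fin m) (Fin m) ℝ :=
  Matrix.of fun i j => if i < j then delta M j else if i = j then ((1 - M) j j)⁻¹ else 0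

lemma mul_invOneSub_apply (N : Matrix (Fin m) (Fin m) ℝ) (i j : Fin m) :
    (N * invOneSub M) i j =
      delta M j * ∑ k with k < j, N i k + N i j * ((1 - M) j j)⁻¹ := by
  simp [invOneSub, Matrix.mul_apply, mul_ite, Finset.sum_ite, Finset.mul_sum, mul_comm]

lemma sum_invOneSub_apply (i : Fin m) :
    ∑ k, invOneSub M i k = ((1 - M) i i)⁻¹ + ∑ k, if i < k then delta M k else 0 := by
  have hsplit : ∀ k, invOneSub M i k =
      (if i = k then ((1 - M) i i)⁻¹ else 0) + if i < k then delta M k else 0 := fun k => by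
    rcases lt_trichotomy i k with h | rfl | h
    · simp [invOneSub, h, h.ne]
    · simp [invOneSub]
    · simp [invOneSub, h.ne', h.not_gt]
  simp only [hsplit, Finset.sum_add_distrib, Finset.sum_ite_eq, Finset.mem_univ, if_true]

lemma delta_mul_add_eq_zero (j : Fin m)
    (hj : (1 - M) ⟨j - 1, by omega⟩ ⟨j - 1, by omega⟩ ≠ 0) :
    delta M j * (1 - M) ⟨j - 1, by omega⟩ ⟨j - 1, by omega⟩ +
      (1 - M) ⟨j - 1, by omega⟩ j * ((1 - M) j j)⁻¹ = 0 := by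
  unfold delta
  field_simp
  ring

variable {M}

lemma exists_forall_gt_eq_mul (φ : Fin m → ℝ)
    (hratio : ∀ i j : Fin m, ∀ h : (i : ℕ) + 1 < (j : ℕ),
      M ⟨(i : ℕ) + 1, Nat.lt_trans h j.isLt⟩ j ≠ 0 ∧
        M i j / M ⟨(i : ℕ) + 1, Nat.lt_trans h j.isLt⟩ j = φ i)
    {i j : Fin m} (hij : i ≤ j) : ∃ c : ℝ, ∀ k, j < k → M i k = c * M j k := by
  obtain ⟨n, hn⟩ : ∃ n, (i : ℕ) + n = j := ⟨j - i, by omega⟩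
  induction n generalizing i with
  | zero => exact ⟨1, fun k _ => by rw [one_mul, Fin.ext (by omega : (i : ℕ) = j)]⟩
  | succ n ih =>
    obtain ⟨c, hc⟩ := ih (i := ⟨i + 1, by omega⟩) (Fin.mk_le_of_le_val (by omega))
      (show (i : ℕ) + 1 + n = j by omega)
    refine ⟨φ i * c, fun k hk => ?_⟩
    obtain ⟨hne, hφ⟩ := hratio i k (by omega)
    rw [mul_assoc, ← hc k hk, ← hφ, div_mul_cancel₀ _ hne]

lemma sum_lt_one_sub_apply_eq_sum_ge {i j : Fin m} (hrow : ∑ k, M i k = 1) (hij : i < j) :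
    ∑ k with k < j, (1 - M) i k = ∑ k with j ≤ k, M i k := by
  have hzero : ∑ k, (1 - M) i k = 0 := by
    simp [Matrix.one_apply, hrow]
  rw [← Finset.sum_filter_add_sum_filter_not _ (· < j), add_eq_zero_iff_eq_neg] at hzero
  rw [hzero, ← Finset.sum_neg_distrib]
  refine Finset.sum_congr (by ext; simp) fun k hk => ?_
  have hik : i ≠ k := by
    simp only [Finset.mem_filter, Finset.mem_univ, true_and] at hk
    exact (hij.trans_le hk).ne
  simp [Matrix.one_apply_ne hik]

lemma sum_lt_one_sub_apply_eq_diag {i j : Fin m} (hut : ∀ k, k < i → M i k = 0)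
    (hij : (i : ℕ) + 1 = j) :
    ∑ k with k < j, (1 - M) i k = (1 - M) i i := by
  refine Finset.sum_eq_single_of_mem _ (by simp; omega) fun k hk hne => ?_
  have hki : k < i := by
    simp only [Finset.mem_filter, Finset.mem_univ, true_and] at hk
    exact lt_of_le_of_ne (by omega) hne
  simp [Matrix.one_apply_ne hki.ne', hut k hki]

lemma one_sub_mul_invOneSub (hut : ∀ i j : Fin m, j < i → M i j = 0)
    (hdiag : ∀ i, M i i < 1) (hrow : ∀ i : Fin m, (i : ℕ) ≠ m - 1 → ∑ j, M i j = 1)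
    (φ : Fin m → ℝ)
    (hratio : ∀ i j : Fin m, ∀ h : (i : ℕ) + 1 < (j : ℕ),
      M ⟨(i : ℕ) + 1, Nat.lt_trans h j.isLt⟩ j ≠ 0 ∧
        M i j / M ⟨(i : ℕ) + 1, Nat.lt_trans h j.isLt⟩ j = φ i) :
    (1 - M) * invOneSub M = 1 := by
  have hA : ∀ i, (1 - M) i i ≠ 0 := fun i => by
    simp only [Matrix.sub_apply, Matrix.one_apply_eq]; linarith [hdiag i]
  ext i j
  rw [mul_invOneSub_apply]
  rcases lt_or_ge i j with hij | hji
  · set j' : Fin m := ⟨j - 1, by omega⟩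
    have hj'j : (j' : ℕ) + 1 = j := by simp only [j']; omega
    have hj' : j' < j := by omega
    obtain ⟨c, hc⟩ := exists_forall_gt_eq_mul φ hratio (show i ≤ j' by omega)
    have hsum : ∑ k with k < j, (1 - M) i k = c * (1 - M) j' j' := by
      rw [← sum_lt_one_sub_apply_eq_diag (hut j') hj'j,
        sum_lt_one_sub_apply_eq_sum_ge (hrow i (by omega)) hij,
        sum_lt_one_sub_apply_eq_sum_ge (hrow j' (by omega)) hj', Finset.mul_sum]
      refine Finset.sum_congr rfl fun k hk => hc k ?_
      simp only [Finset.mem_filter, Finset.mem_univ, true_and] at hk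
      omega
    have hentry : (1 - M) i j = c * (1 - M) j' j := by
      simp [Matrix.one_apply_ne hij.ne, Matrix.one_apply_ne hj'.ne, hc j hj']
    rw [hsum, hentry, Matrix.one_apply_ne hij.ne]
    linear_combination c * delta_mul_add_eq_zero M j (hA j')
  · have hsum : ∑ k with k < j, (1 - M) i k = 0 := Finset.sum_eq_zero fun k hk => by
      have hki : k < i := (Finset.mem_filter.mp hk).2.trans_le hji
      simp [Matrix.one_apply_ne hki.ne', hut i k hki]
    rw [hsum, mul_zero, zero_add]
    rcases hji.eq_or_lt with rfl | hji
    · rw [Matrix.one_apply_eq]; exact mul_inv_cancel₀ (hA j)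
    · simp [Matrix.one_apply_ne hji.ne', hut i j hji]

lemma invOneSub_apply_last (hm : 0 < m) (hut : ∀ i j : Fin m, j < i → M i j = 0)
    (hdiag : ∀ i, M i i < 1)
    (hrow : ∀ i : Fin m, (i : ℕ) ≠ m - 1 → ∑ j, M i j = 1)
    (hlast : ∀ j : Fin m, M ⟨m - 1, Nat.sub_one_lt_of_lt hm⟩ j = 0) (k : Fin m) :
    invOneSub M k ⟨m - 1, Nat.sub_one_lt_of_lt hm⟩ = 1 := by
  set L : Fin m := ⟨m - 1, Nat.sub_one_lt_of_lt hm⟩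
  have hLL : (1 - M) L L = 1 := by simp [hlast]
  obtain hk | rfl : k < L ∨ k = L := by
    rw [Fin.lt_def, Fin.ext_iff]; simp only [L]; omega
  · have hL : 0 < (L : ℕ) := by rw [Fin.lt_def] at hk; omega
    set L' : Fin m := ⟨L - 1, by omega⟩
    have hL'L : (L' : ℕ) + 1 = L := by simp only [L']; omega
    have hL' : L' < L := by omega
    have hrowL' : (1 - M) L' L' = M L' L := by
      rw [← sum_lt_one_sub_apply_eq_diag (hut L') hL'L,
        sum_lt_one_sub_apply_eq_sum_ge (hrow L' (by simp only [L] at hL'L; omega)) hL']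
      refine Finset.sum_eq_single_of_mem _ (by simp) fun j hj hne => ?_
      simp only [Finset.mem_filter, Finset.mem_univ, true_and, Fin.le_def, L] at hj
      exact absurd (Fin.ext (show (j : ℕ) = m - 1 by omega)) hne
    have hA : (1 - M) L' L' ≠ 0 := by
      simp only [Matrix.sub_apply, Matrix.one_apply_eq]; linarith [hdiag L']
    simp only [invOneSub, Matrix.of_apply, if_pos hk]
    change -(1 - M) L' L / ((1 - M) L' L' * (1 - M) L L) = 1
    rw [hLL, mul_one, Matrix.sub_apply, Matrix.one_apply_ne hL'.ne, zero_sub, neg_neg, ← hrowL']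
    exact div_self hA
  · simp [invOneSub, hlast]

lemma inv_mul_inv_mul_apply_last (hm : 0 < m) (hut : ∀ i j : Fin m, j < i → M i j = 0)
    (hdiag : ∀ i, M i i < 1) (hrow : ∀ i : Fin m, (i : ℕ) ≠ m - 1 → ∑ j, M i j = 1)
    (hlast : ∀ j : Fin m, M ⟨m - 1, Nat.sub_one_lt_of_lt hm⟩ j = 0) (φ : Fin m → ℝ)
    (hratio : ∀ i j : Fin m, ∀ h : (i : ℕ) + 1 < (j : ℕ),
      M ⟨(i : ℕ) + 1, Nat.lt_trans h j.isLt⟩ j ≠ 0 ∧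
        M i j / M ⟨(i : ℕ) + 1, Nat.lt_trans h j.isLt⟩ j = φ i) (i : Fin m) :
    ((1 - M)⁻¹ * (1 - M)⁻¹ * M) i ⟨m - 1, Nat.sub_one_lt_of_lt hm⟩ =
      if (i : ℕ) < m - 1 then
        1 / (1 - M) i i +
          ∑ j : Fin m, (if (i : ℕ) < (j : ℕ) ∧ (j : ℕ) < m - 1 then delta M j else 0)
      else 0 := by
  set L : Fin m := ⟨m - 1, Nat.sub_one_lt_of_lt hm⟩
  have hAB := one_sub_mul_invOneSub hut hdiag hrow φ hratio
  have hcol : ∀ k, invOneSub M k L = 1 := invOneSub_apply_last hm hut hdiag hrow hlast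
  have hBM : invOneSub M * M = invOneSub M - 1 := calc
    invOneSub M * M = invOneSub M * (1 - (1 - M)) := by rw [sub_sub_cancel]
    _ = invOneSub M - 1 := by rw [mul_sub, mul_one, mul_eq_one_comm.mp hAB]
  have hentry : (invOneSub M * invOneSub M * M) i L = ∑ k, invOneSub M i k - 1 := by
    rw [Matrix.mul_assoc, hBM, Matrix.mul_sub, Matrix.mul_one, Matrix.sub_apply,
      Matrix.mul_apply, hcol i]
    simp only [hcol, mul_one]
  rw [Matrix.inv_eq_right_inv hAB, hentry, sum_invOneSub_apply, one_div]
  split_ifs with hi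
  · have hiL : i < L := Fin.lt_def.mpr hi
    have hδ : delta M L = 1 := by
      have := hcol i
      rwa [invOneSub, Matrix.of_apply, if_pos hiL] at this
    have hsplit : ∀ k, (if i < k then delta M k else 0) =
        (if (i : ℕ) < k ∧ (k : ℕ) < m - 1 then delta M k else 0) +
          if k = L then 1 else 0 := by
      intro k
      by_cases hkL : k = L
      · rw [if_pos hkL, hkL, if_pos hiL, hδ, if_neg (fun h => (lt_irrefl _ h.2)), zero_add]
      · have hk : (k : ℕ) ≠ m - 1 := fun h => hkL (Fin.ext h)
        rw [if_neg hkL, add_zero]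
        split_ifs <;> first | rfl | omega
    rw [Finset.sum_congr rfl fun k _ => hsplit k, Finset.sum_add_distrib,
      Finset.sum_ite_eq' Finset.univ L, if_pos (Finset.mem_univ L)]
    ring
  · have hiL : i = L := Fin.ext (show (i : ℕ) = m - 1 by omega)
    have hnone : ∀ k, ¬ L < k := fun k h => by
      rw [Fin.lt_def] at h; exact absurd h (show ¬ m - 1 < k by omega)
    simp [hiL, hnone, hlast]

end Baco

theorem expected_optimization_time_explicit (m : ℕ) (hm : 0 < m)
    (M : Matrix (Fin m) (Fin m) ℝ)
    (hut : ∀ i j : Fin m, j < i → M i j = 0)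
    (hdiag : ∀ i : Fin m, 0 ≤ M i i ∧ M i i < 1)
    (hrow : ∀ i : Fin m, (i : ℕ) ≠ m - 1 → ∑ j, M i j = 1)
    (hlast : ∀ j : Fin m, M ⟨m - 1, by omega⟩ j = 0)
    (φ : Fin m → ℝ)
    (hratio : ∀ i j : Fin m, ∀ h : (i : ℕ) + 1 < (j : ℕ),
      M ⟨(i : ℕ) + 1, Nat.lt_trans h j.isLt⟩ j ≠ 0 ∧
        M i j / M ⟨(i : ℕ) + 1, Nat.lt_trans h j.isLt⟩ j = φ i)
    (p : Fin m → ℝ) :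
    ∑ i : Fin m, p i * (((1 - M)⁻¹ * (1 - M)⁻¹ * M) i ⟨m - 1, by omega⟩) =
      ∑ i : Fin m,
        (if (i : ℕ) < m - 1 then
          p i * (1 / (1 - M) i i +
            ∑ j : Fin m, (if (i : ℕ) < (j : ℕ) ∧ (j : ℕ) < m - 1 then delta M j else 0))
        else 0) := by
  refine Finset.sum_congr rfl fun i _ => ?_
  rw [Baco.inv_mul_inv_mul_apply_last hm hut (fun i => (hdiag i).2) hrow hlast φ hratio i,
    mul_ite, mul_zero]
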